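/- Let V₁ : ℝ^{n-1} → ℝ≥0 be continuous and proper, and let a > 0. Then there exists a' > 0 such that for every x₁ with V₁(x₁) ≤ a' there exists x₁' with V₁(x₁') ≤ a' and |x₁ − x₁'| ≤ a. Moreover, defining ã = min{a, a'}, k = 2(M + a)/a², and V(x₁,x₂) = V₁(x₁) + (k/2)(x₂ − φ₁(x₁))² for a given M > 0 and continuous φ₁, the sublevel set {(x₁,x₂) : V(x₁,x₂) ≤ M + ã} is contained in A + a·B, where A = {(x₁,x₂) : V₁(x₁) ≤ M, x₂ = φ₁(x₁)} and B is the closed unit ball of ℝⁿ. -/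
import Mathlib


/-- Inclusion (13) in the proof of Proposition 1: there is `a' > 0` with the shadowing
property, and with `atil = min a a'`, `k = 2(M+a)/a²`,
`V(x₁,x₂) = V₁ x₁ + (k/2)(x₂ - φ₁ x₁)²`, the sublevel set `{V ≤ M + atil}` is contained in
`A + a·B`, where `A = {(x₁,x₂) : V₁ x₁ ≤ M, x₂ = φ₁ x₁}`. -/
theorem sublevel_in_inflated_attractor {m : ℕ}
    (V₁ : EuclideanSpace ℝ (Fin m) → ℝ)
    (φ₁ : EuclideanSpace ℝ (Fin m) → ℝ)
    (hV₁ : Continuous V₁) (hV₁nonneg : ∀ x, 0 ≤ V₁ x)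
    (hproper : ∀ c : ℝ, IsCompact {x | V₁ x ≤ c})
    (hφ₁ : Continuous φ₁)
    (a M : ℝ) (ha : 0 < a) (hM : 0 < M) :
    ∃ a' > (0:ℝ),
      (∀ x₁, V₁ x₁ ≤ a' → ∃ x₁', V₁ x₁' ≤ a' ∧ ‖x₁ - x₁'‖ ≤ a) ∧
      (let atil := min a a'
       let k := 2 * (M + a) / a ^ 2
       ∀ p : EuclideanSpace ℝ (Fin m) × ℝ,
         V₁ p.1 + (k / 2) * (p.2 - φ₁ p.1) ^ 2 ≤ M + atil →
         ∃ q : EuclideanSpace ℝ (Fin m) × ℝ,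
           (V₁ q.1 ≤ M ∧ q.2 = φ₁ q.1) ∧ dist p q ≤ a) := by
  -- Key claim: points slightly above the `M`-sublevel set are close to it, and their
  -- `φ₁`-values are close too.
  obtain ⟨δ, hδ, hclaim⟩ : ∃ δ > (0:ℝ), ∀ x, V₁ x ≤ M + δ →
      ∃ x', V₁ x' ≤ M ∧ ‖x - x'‖ < a / 2 ∧ |φ₁ x - φ₁ x'| < a / 2 := by
    set S := {x | V₁ x ≤ M} with hS
    set U := ⋃ x' ∈ S, Metric.ball x' (a / 2) ∩ φ₁ ⁻¹' Metric.ball (φ₁ x') (a / 2) with hU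
    have hUopen : IsOpen U := isOpen_biUnion fun x' _ =>
      Metric.isOpen_ball.inter (Metric.isOpen_ball.preimage hφ₁)
    have hSU : S ⊆ U := fun x hx =>
      Set.mem_biUnion hx (by simp [half_pos ha])
    have hmemU : ∀ x ∈ U, ∃ x', V₁ x' ≤ M ∧ ‖x - x'‖ < a / 2 ∧ |φ₁ x - φ₁ x'| < a / 2 := by
      intro x hx
      simp only [hU, Set.mem_iUnion, Set.mem_inter_iff, Metric.mem_ball,
        Set.mem_preimage] at hx
      obtain ⟨x', hx', h1, h2⟩ := hx
      exact ⟨x', hx', by rwa [← dist_eq_norm], by rwa [← Real.dist_eq]⟩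
    set C := {x | V₁ x ≤ M + 1} ∩ Uᶜ with hC
    have hCcomp : IsCompact C := (hproper (M + 1)).inter_right hUopen.isClosed_compl
    rcases C.eq_empty_or_nonempty with hCe | hCe
    · refine ⟨1, one_pos, fun x hx => hmemU x ?_⟩
      by_contra h
      exact Set.eq_empty_iff_forall_notMem.mp hCe x ⟨hx, h⟩
    · obtain ⟨x₀, hx₀C, hmin⟩ := hCcomp.exists_isMinOn hCe hV₁.continuousOn
      have hx₀ : M < V₁ x₀ := by
        by_contra h
        exact hx₀C.2 (hSU (le_of_not_gt h))
      refine ⟨min 1 ((V₁ x₀ - M) / 2), lt_min one_pos (by linarith), fun x hx => ?_⟩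
      apply hmemU
      by_contra h
      have hxC : x ∈ C := by
        refine ⟨?_, h⟩
        have := min_le_left 1 ((V₁ x₀ - M) / 2)
        simp only [Set.mem_setOf_eq]; linarith
      have h1 := hmin hxC
      have h2 := min_le_right 1 ((V₁ x₀ - M) / 2)
      simp only [Set.mem_setOf_eq] at h1
      linarith
  refine ⟨min δ ((M + a) / 4), lt_min hδ (by linarith), fun x₁ hx₁ => ⟨x₁, hx₁, by simp [ha.le]⟩, ?_⟩
  intro atil k p hp
  have hatil_a : atil ≤ a := min_le_left _ _
  have hatil_δ : atil ≤ δ := le_trans (min_le_right _ _) (min_le_left _ _)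
  have hatil_4 : atil ≤ (M + a) / 4 := le_trans (min_le_right _ _) (min_le_right _ _)
  have hk : k = 2 * (M + a) / a ^ 2 := rfl
  have ha2 : (0:ℝ) < a ^ 2 := by positivity
  set t := (p.2 - φ₁ p.1) ^ 2 with ht
  have htn : 0 ≤ t := sq_nonneg _
  have hp' : V₁ p.1 + (M + a) / a ^ 2 * t ≤ M + atil := by
    have : k / 2 = (M + a) / a ^ 2 := by rw [hk]; ring
    rw [← this]; exact hp
  rcases le_or_gt (V₁ p.1) M with hVM | hVM
  · -- close to the graph over the same base point
    refine ⟨(p.1, φ₁ p.1), ⟨hVM, rfl⟩, ?_⟩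
    rw [Prod.dist_eq]
    refine max_le (by simp [ha.le]) ?_
    rw [Real.dist_eq]
    have hta : t ≤ a ^ 2 := by
      have h1 : (M + a) / a ^ 2 * t ≤ M + a := by
        have := hV₁nonneg p.1; linarith
      have h2 : (0:ℝ) < M + a := by linarith
      rw [div_mul_eq_mul_div, div_le_iff₀ ha2] at h1
      nlinarith
    nlinarith [sq_abs (p.2 - φ₁ p.1), abs_nonneg (p.2 - φ₁ p.1)]
  · -- use the claim
    obtain ⟨x', hx'M, hx'd, hx'φ⟩ := hclaim p.1 (by nlinarith [mul_nonneg (le_of_lt (div_pos (by linarith : (0:ℝ) < M + a) ha2)) htn])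
    have htsmall : |p.2 - φ₁ p.1| < a / 2 := by
      have h1 : (M + a) / a ^ 2 * t < atil := by linarith
      have h2 : (M + a) / a ^ 2 * t < (M + a) / 4 := lt_of_lt_of_le h1 hatil_4
      have h3 : t < a ^ 2 / 4 := by
        have hMA : (0:ℝ) < M + a := by linarith
        rw [div_mul_eq_mul_div, div_lt_div_iff₀ ha2 (by norm_num : (0:ℝ) < 4)] at h2
        nlinarith
      nlinarith [sq_abs (p.2 - φ₁ p.1), abs_nonneg (p.2 - φ₁ p.1)]
    refine ⟨(x', φ₁ x'), ⟨hx'M, rfl⟩, ?_⟩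
    rw [Prod.dist_eq]
    refine max_le ?_ ?_
    · rw [dist_eq_norm]; linarith
    · rw [Real.dist_eq]
      have htri : |p.2 - φ₁ x'| ≤ |p.2 - φ₁ p.1| + |φ₁ p.1 - φ₁ x'| := by
        have := abs_sub_le p.2 (φ₁ p.1) (φ₁ x')
        simpa using this
      linarith
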